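/- In any shortest valid path in the marked cycle, a c-move is never immediately followed by an a-move, and an a-move is never immediately followed by a c-move. -/
import Mathlib


/-- The four move types in the marked cycle. -/
inductive Move : Type
  | a | b | c | d
deriving DecidableEq

/-- Where a move from node `x` in `ZMod k` leads. -/
def Move.step {k : ℕ} (x : ZMod k) : Move → ZMod k
  | .a => x - 1
  | .b => x
  | .c => x + 1
  | .d => x

/-- The node covered by a move performed from node `x`. -/
def Move.covers {k : ℕ} (x : ZMod k) : Move → ZMod k
  | .a => x - 1
  | .b => x
  | .c => x
  | .d => x - 1

/-- The node reached after performing a sequence of moves starting at `s`. -/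
def endAt {k : ℕ} (s : ZMod k) : List Move → ZMod k
  | [] => s
  | m :: ms => endAt (Move.step s m) ms

/-- The set of nodes covered by a sequence of moves starting at `s`. -/
def coveredSet {k : ℕ} (s : ZMod k) : List Move → Set (ZMod k)
  | [] => ∅
  | m :: ms => insert (Move.covers s m) (coveredSet (Move.step s m) ms)

/-- A valid path in the marked cycle on `ZMod k` with marked set `B`, start `s`,
end `t`: a nonempty sequence of moves from `s` to `t` covering every node of `B`. -/
def ValidPath {k : ℕ} (B : Set (ZMod k)) (s t : ZMod k) (p : List Move) : Prop :=
  p ≠ [] ∧ endAt s p = t ∧ B ⊆ coveredSet s p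

/-- A shortest valid path: valid and of minimum length among all valid paths. -/
def ShortestPath {k : ℕ} (B : Set (ZMod k)) (s t : ZMod k) (p : List Move) : Prop :=
  ValidPath B s t p ∧ ∀ q : List Move, ValidPath B s t q → p.length ≤ q.length

lemma endAt_append {k : ℕ} (s : ZMod k) (l r : List Move) :
    endAt s (l ++ r) = endAt (endAt s l) r := by
  induction l generalizing s with
  | nil => rfl
  | cons m ms ih => simp [endAt, ih]

lemma coveredSet_append {k : ℕ} (s : ZMod k) (l r : List Move) :
    coveredSet s (l ++ r) = coveredSet s l ∪ coveredSet (endAt s l) r := by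
  induction l generalizing s with
  | nil => simp [coveredSet, endAt]
  | cons m ms ih => simp [coveredSet, endAt, ih, Set.insert_union]

/-- in a shortest valid path, a c-move is never immediately followed by
an a-move, and an a-move is never immediately followed by a c-move. -/
theorem no_ca_ac (k : ℕ) (hk : 2 ≤ k) (B : Set (ZMod k)) (s t : ZMod k)
    (p : List Move) (hp : ShortestPath B s t p) :
    ¬ [Move.c, Move.a] <:+: p ∧ ¬ [Move.a, Move.c] <:+: p := by
  obtain ⟨⟨hne, hend, hcov⟩, hmin⟩ := hp
  constructor
  · rintro ⟨l, r, rfl⟩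
    have h := hmin (l ++ [Move.b] ++ r) ?_
    · simp at h
    · refine ⟨by simp, ?_, ?_⟩
      · rw [← hend]
        simp [endAt_append, endAt, Move.step]
      · intro x hx
        have := hcov hx
        simp [coveredSet_append, coveredSet, endAt, Move.step, Move.covers] at this ⊢
        tauto
  · rintro ⟨l, r, rfl⟩
    have h := hmin (l ++ [Move.d] ++ r) ?_
    · simp at h
    · refine ⟨by simp, ?_, ?_⟩
      · rw [← hend]
        simp [endAt_append, endAt, Move.step]
      · intro x hx
        have := hcov hx
        simp [coveredSet_append, coveredSet, endAt, Move.step, Move.covers] at this ⊢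
        tauto
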